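/- arXiv:1005.3336 — 5 statements merged into one kernel-verified Lean document; each statement's English description precedes it below -/
import Mathlib

section
/- Let α ∈ (0, π] and let λ be a nonzero real number. Then the Dirichlet integral ∫_{G \ B(0,1)} |∇v_λ(x)|² dx over the part of the sector outside the unit disc is finite if and only if λ < 0, in which case it equals −αλ/2. -/
open MeasureTheory

/-- The open plane sector `G = {(r cos θ, r sin θ) : r > 0, 0 < θ < α}` of opening
angle `α`. -/
def sector (α : ℝ) : Set (ℝ × ℝ) :=
  {p | ∃ r θ : ℝ, 0 < r ∧ 0 < θ ∧ θ < α ∧ p = (r * Real.cos θ, r * Real.sin θ)}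

/-- The open unit disc `B(0,1)` in the plane. -/
def unitDisc : Set (ℝ × ℝ) := {p | p.1 ^ 2 + p.2 ^ 2 < 1}

/-- The separated solution `v_λ(x₁, x₂) = Im((x₁ + i x₂)^λ)`, where the complex power
uses the principal branch of the logarithm. -/
noncomputable def vpow (l : ℝ) (p : ℝ × ℝ) : ℝ :=
  (((p.1 : ℂ) + Complex.I * (p.2 : ℂ)) ^ (l : ℂ)).im

/-- The squared Euclidean norm of the gradient of `v_λ`. -/
noncomputable def gradSqVpow (l : ℝ) (p : ℝ × ℝ) : ℝ :=
  fderiv ℝ (vpow l) p (1, 0) ^ 2 + fderiv ℝ (vpow l) p (0, 1) ^ 2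

/-!
In polar coordinates `v_λ` is the imaginary part of the holomorphic function `z ^ λ`, so by the
Cauchy–Riemann equations `|∇v_λ|² = |λ z ^ (λ - 1)|² = λ² r ^ (2λ - 2)`. Since `α ≤ π`, polar
coordinates map `[1, ∞) × (0, α)` bijectively onto `G \ B(0,1)`, and the Dirichlet integral becomes
`α λ² ∫₁^∞ r ^ (2λ - 1) dr`, which is finite iff `2λ - 1 < -1` and then equals `-αλ/2`.
-/

open Set Complex

lemma fderiv_im_comp_equivRealProd_apply {f : ℂ → ℂ} {p : ℝ × ℝ}
    (hf : DifferentiableAt ℂ f (equivRealProdCLM.symm p)) (v : ℝ × ℝ) :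
    fderiv ℝ (fun q => (f (equivRealProdCLM.symm q)).im) p v =
      (equivRealProdCLM.symm v * deriv f (equivRealProdCLM.symm p)).im := by
  have h : HasFDerivAt (fun q => (f (equivRealProdCLM.symm q)).im) _ p :=
    imCLM.hasFDerivAt.comp p <| (hf.hasDerivAt.hasFDerivAt.restrictScalars ℝ).comp p
      equivRealProdCLM.symm.toContinuousLinearMap.hasFDerivAt
  rw [h.fderiv]
  simp [mul_comm]

lemma sq_fderiv_im_comp_equivRealProd_add_sq {f : ℂ → ℂ} {p : ℝ × ℝ}
    (hf : DifferentiableAt ℂ f (equivRealProdCLM.symm p)) :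
    fderiv ℝ (fun q => (f (equivRealProdCLM.symm q)).im) p (1, 0) ^ 2 +
        fderiv ℝ (fun q => (f (equivRealProdCLM.symm q)).im) p (0, 1) ^ 2 =
      ‖deriv f (equivRealProdCLM.symm p)‖ ^ 2 := by
  rw [fderiv_im_comp_equivRealProd_apply hf, fderiv_im_comp_equivRealProd_apply hf,
    ← normSq_eq_norm_sq, normSq_apply]
  simp only [mul_im, equivRealProdCLM_symm_apply_re, equivRealProdCLM_symm_apply_im, one_mul,
    zero_mul, add_zero, zero_add]
  ring

lemma vpow_eq_im_cpow (l : ℝ) : vpow l = fun q => ((equivRealProdCLM.symm q) ^ (l : ℂ)).im := by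
  ext q
  rw [vpow, equivRealProdCLM_symm_apply, mul_comm]

lemma gradSqVpow_eq_norm_sq {l : ℝ} {p : ℝ × ℝ} (hp : equivRealProdCLM.symm p ∈ slitPlane) :
    gradSqVpow l p = ‖(l : ℂ) * equivRealProdCLM.symm p ^ ((l : ℂ) - 1)‖ ^ 2 := by
  have h := (hasStrictDerivAt_cpow_const (c := (l : ℂ)) hp).hasDerivAt
  rw [gradSqVpow, vpow_eq_im_cpow, sq_fderiv_im_comp_equivRealProd_add_sq h.differentiableAt,
    h.deriv]

lemma polarCoord_symm_mem_slitPlane {p : ℝ × ℝ} (hp : p ∈ polarCoord.target) :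
    equivRealProdCLM.symm (polarCoord.symm p) ∈ slitPlane := by
  simpa [mem_slitPlane_iff] using polarCoord.symm.map_source hp

lemma norm_equivRealProdCLM_symm_polarCoord_symm {p : ℝ × ℝ} (hp : 0 ≤ p.1) :
    ‖equivRealProdCLM.symm (polarCoord.symm p)‖ = p.1 := by
  rw [equivRealProdCLM_symm_apply, norm_add_mul_I]
  simp [mul_pow, ← mul_add, Real.sqrt_sq hp]

lemma fst_mul_gradSqVpow_polarCoord_symm (l : ℝ) {p : ℝ × ℝ} (hp : p ∈ polarCoord.target) :
    p.1 * gradSqVpow l (polarCoord.symm p) = l ^ 2 * p.1 ^ (2 * l - 1) := by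
  have hr : 0 < p.1 := hp.1
  rw [gradSqVpow_eq_norm_sq (polarCoord_symm_mem_slitPlane hp), norm_mul, norm_real,
    Real.norm_eq_abs, ← ofReal_one, ← ofReal_sub, norm_cpow_real,
    norm_equivRealProdCLM_symm_polarCoord_symm hr.le, mul_pow, sq_abs,
    ← Real.rpow_mul_natCast hr.le, show 2 * l - 1 = 1 + (l - 1) * (2 : ℕ) by push_cast; ring,
    Real.rpow_add hr, Real.rpow_one]
  ring

section PolarCoord

variable {E : Type*} [NormedAddCommGroup E] [NormedSpace ℝ E] {s : Set (ℝ × ℝ)}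

lemma abs_det_fderivPolarCoordSymm_eqOn (hs : s ⊆ polarCoord.target) :
    EqOn (fun p => |(fderivPolarCoordSymm p).det|) Prod.fst s := fun p hp => by
  simp only [det_fderivPolarCoordSymm, abs_of_pos (mem_Ioi.1 (hs hp).1)]

lemma integrableOn_image_polarCoord_symm_iff (hs : MeasurableSet s) (hst : s ⊆ polarCoord.target)
    (f : ℝ × ℝ → E) :
    IntegrableOn f (polarCoord.symm '' s) ↔
      IntegrableOn (fun p => p.1 • f (polarCoord.symm p)) s := by
  rw [integrableOn_image_iff_integrableOn_abs_det_fderiv_smul volume hs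
    (fun p _ => (hasFDerivAt_polarCoord_symm p).hasFDerivWithinAt)
    (polarCoord.symm.injOn.mono hst)]
  exact integrableOn_congr_fun (fun p hp => by
    simp only [abs_det_fderivPolarCoordSymm_eqOn hst hp]) hs

lemma setIntegral_image_polarCoord_symm (hs : MeasurableSet s) (hst : s ⊆ polarCoord.target)
    (f : ℝ × ℝ → E) :
    ∫ x in polarCoord.symm '' s, f x = ∫ p in s, p.1 • f (polarCoord.symm p) := by
  rw [integral_image_eq_integral_abs_det_fderiv_smul volume hs
    (fun p _ => (hasFDerivAt_polarCoord_symm p).hasFDerivWithinAt)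
    (polarCoord.symm.injOn.mono hst)]
  exact setIntegral_congr_fun hs (fun p hp => by
    simp only [abs_det_fderivPolarCoordSymm_eqOn hst hp])

end PolarCoord

lemma polarCoord_symm_mem_unitDisc_iff {p : ℝ × ℝ} (hp : 0 ≤ p.1) :
    polarCoord.symm p ∈ unitDisc ↔ p.1 < 1 := by
  rw [unitDisc, mem_ofPred_eq, polarCoord_symm_apply, mul_pow, mul_pow, ← mul_add,
    Real.cos_sq_add_sin_sq, mul_one, sq_lt_one_iff₀ hp]

lemma sector_eq_image_polarCoord_symm (α : ℝ) :
    sector α = polarCoord.symm '' (Ioi 0 ×ˢ Ioo 0 α) := by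
  ext p
  simp only [sector, mem_ofPred_eq, mem_image, mem_prod, mem_Ioi, mem_Ioo, polarCoord_symm_apply,
    Prod.exists]
  grind

lemma sector_diff_unitDisc (α : ℝ) :
    sector α \ unitDisc = polarCoord.symm '' (Ici 1 ×ˢ Ioo 0 α) := by
  rw [sector_eq_image_polarCoord_symm]
  ext p
  constructor
  · rintro ⟨⟨q, hq, rfl⟩, hout⟩
    exact ⟨q, ⟨not_lt.1 ((polarCoord_symm_mem_unitDisc_iff (le_of_lt hq.1)).not.1 hout), hq.2⟩,
      rfl⟩
  · rintro ⟨q, hq, rfl⟩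
    have h1 : (1 : ℝ) ≤ q.1 := hq.1
    exact ⟨⟨q, ⟨zero_lt_one.trans_le h1, hq.2⟩, rfl⟩,
      (polarCoord_symm_mem_unitDisc_iff (zero_le_one.trans h1)).not.2 (not_lt.2 h1)⟩

section Prod

variable {X Y E : Type*} [MeasurableSpace X] [MeasurableSpace Y] [NormedAddCommGroup E]
  {μ : Measure X} {ν : Measure Y} [SFinite μ] [SFinite ν] {s : Set X} {t : Set Y}

lemma integrableOn_prod_comp_fst_iff (ht₀ : ν t ≠ 0) (ht : ν t ≠ ⊤) {f : X → E} :
    IntegrableOn (fun p : X × Y => f p.1) (s ×ˢ t) (μ.prod ν) ↔ IntegrableOn f s μ := by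
  have : IsFiniteMeasure (ν.restrict t) := isFiniteMeasure_restrict.2 ht
  rw [IntegrableOn, ← Measure.prod_restrict]
  exact Integrable.comp_fst_iff (by rwa [Ne, Measure.restrict_eq_zero])

lemma setIntegral_prod_comp_fst [NormedSpace ℝ E] (f : X → E) :
    ∫ p in s ×ˢ t, f p.1 ∂μ.prod ν = ν.real t • ∫ x in s, f x ∂μ := by
  rw [← Measure.prod_restrict, integral_fun_fst, measureReal_restrict_apply_univ]

end Prod

lemma integrableOn_Ici_one_rpow_iff {a : ℝ} :
    IntegrableOn (fun x : ℝ => x ^ a) (Ici 1) ↔ a < -1 := by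
  rw [integrableOn_Ici_iff_integrableOn_Ioi, integrableOn_Ioi_rpow_iff zero_lt_one]

lemma integral_Ici_one_rpow {a : ℝ} (ha : a < -1) :
    ∫ x in Ici (1 : ℝ), x ^ a = -1 / (a + 1) := by
  rw [setIntegral_congr_set Ioi_ae_eq_Ici.symm, integral_Ioi_rpow_of_lt ha zero_lt_one,
    Real.one_rpow]

/-- For `α ∈ (0, π]` and `λ ≠ 0`, the Dirichlet integral
`∫_{G \ B(0,1)} |∇v_λ|²` over the part of the sector outside the unit disc is finite
iff `λ < 0`, in which case it equals `−αλ/2`. -/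
theorem stmt_8 (α l : ℝ) (hα₀ : 0 < α) (hα₁ : α ≤ Real.pi) (hl : l ≠ 0) :
    (IntegrableOn (gradSqVpow l) (sector α \ unitDisc) volume ↔ l < 0) ∧
    (l < 0 → ∫ x in sector α \ unitDisc, gradSqVpow l x = -(α * l) / 2) := by
  have hPm : MeasurableSet (Ici (1 : ℝ) ×ˢ Ioo 0 α) := measurableSet_Ici.prod measurableSet_Ioo
  have hPt : Ici (1 : ℝ) ×ˢ Ioo 0 α ⊆ polarCoord.target :=
    prod_mono (Ici_subset_Ioi.2 zero_lt_one) (Ioo_subset_Ioo (by linarith [Real.pi_pos]) hα₁)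
  have hpolar : EqOn (fun p => p.1 • gradSqVpow l (polarCoord.symm p))
      (fun p => l ^ 2 * p.1 ^ (2 * l - 1)) (Ici 1 ×ˢ Ioo 0 α) := fun p hp =>
    fst_mul_gradSqVpow_polarCoord_symm l (hPt hp)
  have hvol₀ : volume (Ioo 0 α) ≠ 0 := by simp [hα₀]
  have hvol : volume (Ioo 0 α) ≠ ⊤ := measure_Ioo_lt_top.ne
  rw [sector_diff_unitDisc]
  refine ⟨?_, fun hneg => ?_⟩
  · rw [integrableOn_image_polarCoord_symm_iff hPm hPt, integrableOn_congr_fun hpolar hPm,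
      Measure.volume_eq_prod,
      integrableOn_prod_comp_fst_iff hvol₀ hvol (f := fun r => l ^ 2 * r ^ (2 * l - 1)),
      IntegrableOn, integrable_const_mul_iff (pow_ne_zero 2 hl).isUnit, ← IntegrableOn,
      integrableOn_Ici_one_rpow_iff]
    constructor <;> intro <;> linarith
  · rw [setIntegral_image_polarCoord_symm hPm hPt, setIntegral_congr_fun hPm hpolar,
      Measure.volume_eq_prod, setIntegral_prod_comp_fst (fun r => l ^ 2 * r ^ (2 * l - 1)),
      integral_const_mul, integral_Ici_one_rpow (by linarith), Real.volume_real_Ioo_of_le hα₀.le,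
      smul_eq_mul, sub_zero, show 2 * l - 1 + 1 = 2 * l by ring]
    field_simp
end

section
/- Let α ∈ (0, π] and let G, Γ₁, Γ₂ be as in the context. Let u : ℝ² → ℝ be continuous on cl(G), continuously differentiable on an open set containing cl(G) \ {0}, harmonic on G, with u(x₁, 0) = 0 for all x₁ > 0 and −sin α · ∂u/∂x₁ + cos α · ∂u/∂x₂ = 0 at every point of Γ₂. Assume there exist constants C > 0 and δ > 0 such that for all x ∈ cl(G) \ {0}: |u(x)|·|∇u(x)| ≤ C|x|^{δ−1} whenever 0 < |x| ≤ 1, and ≤ C|x|^{−δ−1} whenever |x| ≥ 1, and assume |∇u|² is integrable on G. Then u = 0 on G. -/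
open MeasureTheory

/-- First partial derivative `∂u/∂x₁`. -/
noncomputable def pd1 (u : ℝ × ℝ → ℝ) (x : ℝ × ℝ) : ℝ := fderiv ℝ u x (1, 0)

/-- Second partial derivative `∂u/∂x₂`. -/
noncomputable def pd2 (u : ℝ × ℝ → ℝ) (x : ℝ × ℝ) : ℝ := fderiv ℝ u x (0, 1)

/-- Euclidean norm `|∇u(x)|` of the gradient. -/
noncomputable def gradNorm (u : ℝ × ℝ → ℝ) (x : ℝ × ℝ) : ℝ :=
  Real.sqrt (pd1 u x ^ 2 + pd2 u x ^ 2)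

/-- Squared Euclidean norm `|∇u(x)|²` of the gradient. -/
noncomputable def gradSq (u : ℝ × ℝ → ℝ) (x : ℝ × ℝ) : ℝ :=
  pd1 u x ^ 2 + pd2 u x ^ 2

/-- `u` is harmonic on `G`: at every point of `G` it is twice differentiable and
`∂²u/∂x₁² + ∂²u/∂x₂² = 0`. -/
def HarmonicOnSector (α : ℝ) (u : ℝ × ℝ → ℝ) : Prop :=
  ∀ x ∈ sector α, DifferentiableAt ℝ u x ∧ DifferentiableAt ℝ (fderiv ℝ u) x ∧
    fderiv ℝ (fderiv ℝ u) x (1, 0) (1, 0) + fderiv ℝ (fderiv ℝ u) x (0, 1) (0, 1) = 0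

/-- Zero Neumann data on `Γ₂ = {(r cos α, r sin α) : r > 0}`:
`−sin α · ∂u/∂x₁ + cos α · ∂u/∂x₂ = 0` there. -/
def NeumannOnGamma2 (α : ℝ) (u : ℝ × ℝ → ℝ) : Prop :=
  ∀ r : ℝ, 0 < r →
    -Real.sin α * pd1 u (r * Real.cos α, r * Real.sin α)
      + Real.cos α * pd2 u (r * Real.cos α, r * Real.sin α) = 0

/-! Pass to the coordinates `(s, θ) = (log |x|, arg x)`, in which `G` becomes the strip
`ℝ × (0, α)` and `u` stays harmonic. There `div (u ∇u) = |∇u|²`, so the energy of `u` on the box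
`[-R, R] × [0, α]` is the flux of `u ∇u` through its boundary. The flux through the horizontal
sides vanishes: `u = 0` on `θ = 0` and `∂_θ u = 0` on `θ = α`. Through the vertical sides it is
`∫ u ∂_s u dθ`, and `|u ∂_s u| ≤ |x| |u| |∇u| ≤ C e^{-δ |s|}` by the decay hypothesis. Letting
`R → ∞`, the energy vanishes, so `∂_θ u = 0` and `u` is constant on every arc `|x| = r`, equal
to its boundary value `0` on `Γ₁`. -/

open Real Set Filter Topology

lemma ContinuousLinearMap.apply_eq_fst_smul_add_snd_smul {F : Type*} [AddCommGroup F] [Module ℝ F]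
    [TopologicalSpace F] (B : ℝ × ℝ →L[ℝ] F) (x : ℝ × ℝ) :
    B x = x.1 • B (1, 0) + x.2 • B (0, 1) := by
  rw [← map_smul, ← map_smul, ← map_add]
  simp

def quarterTurn : ℝ × ℝ →L[ℝ] ℝ × ℝ :=
  (-ContinuousLinearMap.snd ℝ ℝ ℝ).prod (ContinuousLinearMap.fst ℝ ℝ ℝ)

@[simp]
lemma quarterTurn_apply (x : ℝ × ℝ) : quarterTurn x = (-x.2, x.1) := rfl

lemma bilinear_add_bilinear_quarterTurn (B : ℝ × ℝ →L[ℝ] ℝ × ℝ →L[ℝ] ℝ) (x : ℝ × ℝ) :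
    B x x + B (quarterTurn x) (quarterTurn x) =
      (x.1 ^ 2 + x.2 ^ 2) * (B (1, 0) (1, 0) + B (0, 1) (0, 1)) := by
  have hB : ∀ y z : ℝ × ℝ, B y z = y.1 * z.1 * B (1, 0) (1, 0) + y.1 * z.2 * B (1, 0) (0, 1)
      + y.2 * z.1 * B (0, 1) (1, 0) + y.2 * z.2 * B (0, 1) (0, 1) := fun y z => by
    rw [B.apply_eq_fst_smul_add_snd_smul y, add_apply, smul_apply, smul_apply,
      (B (1, 0)).apply_eq_fst_smul_add_snd_smul z, (B (0, 1)).apply_eq_fst_smul_add_snd_smul z]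
    simp only [smul_eq_mul]
    ring
  rw [hB, hB (quarterTurn x)]
  simp only [quarterTurn_apply]
  ring

lemma abs_fderiv_apply_le (u : ℝ × ℝ → ℝ) (x y : ℝ × ℝ) :
    |fderiv ℝ u x y| ≤ gradNorm u x * √(y.1 ^ 2 + y.2 ^ 2) := by
  rw [gradNorm, ← Real.sqrt_mul (by positivity), ← Real.sqrt_sq_eq_abs,
    (fderiv ℝ u x).apply_eq_fst_smul_add_snd_smul]
  refine Real.sqrt_le_sqrt ?_
  simp only [pd1, pd2, smul_eq_mul]
  nlinarith [sq_nonneg (y.1 * fderiv ℝ u x (0, 1) - y.2 * fderiv ℝ u x (1, 0))]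

section Flux

variable {E : Type*} [NormedAddCommGroup E] [NormedSpace ℝ E]

noncomputable def fluxAlong (u : E → ℝ) (A : E →L[ℝ] E) (x : E) : ℝ := u x * fderiv ℝ u x (A x)

lemma hasFDerivAt_fluxAlong {u : E → ℝ} {x : E} (A : E →L[ℝ] E) (hu : DifferentiableAt ℝ u x)
    (hu' : DifferentiableAt ℝ (fderiv ℝ u) x) :
    HasFDerivAt (fluxAlong u A)
      (u x • ((fderiv ℝ u x).comp A + (fderiv ℝ (fderiv ℝ u) x).flip (A x))
        + fderiv ℝ u x (A x) • fderiv ℝ u x) x :=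
  hu.hasFDerivAt.mul (hu'.hasFDerivAt.clm_apply A.hasFDerivAt)

lemma ContDiffOn.continuousOn_fluxAlong {u : E → ℝ} {U : Set E} (hu : ContDiffOn ℝ 1 u U)
    (hU : IsOpen U) (A : E →L[ℝ] E) : ContinuousOn (fluxAlong u A) U :=
  hu.continuousOn.mul
    ((hu.continuousOn_fderiv_of_isOpen hU le_rfl).clm_apply A.continuous.continuousOn)

end Flux

/-- `|x|² |∇u(x)|²`, the Dirichlet energy density of `u` in the coordinates `(log |x|, arg x)`. -/
noncomputable def polarEnergy (u : ℝ × ℝ → ℝ) (x : ℝ × ℝ) : ℝ :=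
  fderiv ℝ u x x ^ 2 + fderiv ℝ u x (quarterTurn x) ^ 2

lemma polarEnergy_nonneg (u : ℝ × ℝ → ℝ) (x : ℝ × ℝ) : 0 ≤ polarEnergy u x := by
  unfold polarEnergy
  positivity

lemma ContDiffOn.continuousOn_polarEnergy {u : ℝ × ℝ → ℝ} {U : Set (ℝ × ℝ)}
    (hu : ContDiffOn ℝ 1 u U) (hU : IsOpen U) : ContinuousOn (polarEnergy u) U := by
  have hDu := hu.continuousOn_fderiv_of_isOpen hU le_rfl
  exact ((hDu.clm_apply continuousOn_id).pow 2).add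
    ((hDu.clm_apply quarterTurn.continuous.continuousOn).pow 2)

lemma fderiv_fluxAlong_add_fderiv_fluxAlong_quarterTurn {u : ℝ × ℝ → ℝ} {x : ℝ × ℝ}
    (hu : DifferentiableAt ℝ u x) (hu' : DifferentiableAt ℝ (fderiv ℝ u) x) :
    fderiv ℝ (fluxAlong u (.id ℝ _)) x x + fderiv ℝ (fluxAlong u quarterTurn) x (quarterTurn x)
      = polarEnergy u x + u x * (x.1 ^ 2 + x.2 ^ 2) *
        (fderiv ℝ (fderiv ℝ u) x (1, 0) (1, 0) + fderiv ℝ (fderiv ℝ u) x (0, 1) (0, 1)) := by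
  rw [(hasFDerivAt_fluxAlong _ hu hu').fderiv, (hasFDerivAt_fluxAlong _ hu hu').fderiv,
    mul_assoc (u x), ← bilinear_add_bilinear_quarterTurn]
  have hJJ : quarterTurn (quarterTurn x) = -x := by simp [Prod.ext_iff]
  simp only [add_apply, smul_apply, ContinuousLinearMap.comp_apply, ContinuousLinearMap.flip_apply,
    ContinuousLinearMap.id_apply, hJJ, map_neg, smul_eq_mul, polarEnergy]
  ring

noncomputable def expPolar (p : ℝ × ℝ) : ℝ × ℝ := (exp p.1 * cos p.2, exp p.1 * sin p.2)

lemma continuous_expPolar : Continuous expPolar := by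
  unfold expPolar
  fun_prop

lemma hasFDerivAt_expPolar (p : ℝ × ℝ) :
    HasFDerivAt expPolar ((ContinuousLinearMap.fst ℝ ℝ ℝ).smulRight (expPolar p)
      + (ContinuousLinearMap.snd ℝ ℝ ℝ).smulRight (quarterTurn (expPolar p))) p := by
  have hexp := (hasDerivAt_exp p.1).comp_hasFDerivAt p (hasFDerivAt_fst (𝕜 := ℝ) (p := p))
  have hcos := (hasDerivAt_cos p.2).comp_hasFDerivAt p (hasFDerivAt_snd (𝕜 := ℝ) (p := p))
  have hsin := (hasDerivAt_sin p.2).comp_hasFDerivAt p (hasFDerivAt_snd (𝕜 := ℝ) (p := p))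
  refine ((hexp.mul hcos).prodMk (hexp.mul hsin)).congr_fderiv ?_
  ext <;> simp [expPolar] <;> ring

section Comp

variable {F : Type*} [NormedAddCommGroup F] [NormedSpace ℝ F] {f : ℝ × ℝ → F} {p : ℝ × ℝ}

lemma fderiv_comp_expPolar_apply_fst (hf : DifferentiableAt ℝ f (expPolar p)) :
    fderiv ℝ (f ∘ expPolar) p (1, 0) = fderiv ℝ f (expPolar p) (expPolar p) := by
  simp [(hf.hasFDerivAt.comp p (hasFDerivAt_expPolar p)).fderiv]

lemma fderiv_comp_expPolar_apply_snd (hf : DifferentiableAt ℝ f (expPolar p)) :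
    fderiv ℝ (f ∘ expPolar) p (0, 1) = fderiv ℝ f (expPolar p) (quarterTurn (expPolar p)) := by
  simp [(hf.hasFDerivAt.comp p (hasFDerivAt_expPolar p)).fderiv]

lemma hasDerivAt_comp_expPolar_snd (hf : DifferentiableAt ℝ f (expPolar p)) :
    HasDerivAt (fun θ => f (expPolar (p.1, θ)))
      (fderiv ℝ f (expPolar p) (quarterTurn (expPolar p))) p.2 := by
  have h := (hf.hasFDerivAt.comp p (hasFDerivAt_expPolar p)).comp_hasDerivAt p.2
    ((hasDerivAt_const p.2 p.1).prodMk (hasDerivAt_id p.2))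
  exact h.congr_deriv (by simp)

end Comp

lemma sqrt_expPolar (p : ℝ × ℝ) : √((expPolar p).1 ^ 2 + (expPolar p).2 ^ 2) = exp p.1 := by
  rw [show (expPolar p).1 ^ 2 + (expPolar p).2 ^ 2 = exp p.1 ^ 2 by
    simp only [expPolar]; linear_combination exp p.1 ^ 2 * cos_sq_add_sin_sq p.2]
  exact sqrt_sq (exp_pos _).le

lemma expPolar_ne_zero (p : ℝ × ℝ) : expPolar p ≠ 0 := by
  intro h
  have := congrArg (fun x : ℝ × ℝ => √(x.1 ^ 2 + x.2 ^ 2)) h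
  simp only [sqrt_expPolar] at this
  simp [(exp_pos p.1).ne'] at this

lemma expPolar_mem_sector {α : ℝ} {p : ℝ × ℝ} (hp : p.2 ∈ Ioo 0 α) : expPolar p ∈ sector α :=
  ⟨exp p.1, p.2, exp_pos _, hp.1, hp.2, rfl⟩

lemma expPolar_image_strip (α : ℝ) : expPolar '' (univ ×ˢ Ioo 0 α) = sector α := by
  ext x
  constructor
  · rintro ⟨p, ⟨-, hp⟩, rfl⟩
    exact expPolar_mem_sector hp
  · rintro ⟨r, θ, hr, hθ, hθα, rfl⟩
    exact ⟨(log r, θ), ⟨mem_univ _, hθ, hθα⟩, by simp [expPolar, exp_log hr]⟩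

lemma expPolar_mem_closure_sector {α : ℝ} (hα : 0 < α) {p : ℝ × ℝ} (hp : p.2 ∈ Icc 0 α) :
    expPolar p ∈ closure (sector α) \ {0} := by
  refine ⟨?_, expPolar_ne_zero p⟩
  rw [← expPolar_image_strip]
  refine image_closure_subset_closure_image continuous_expPolar ⟨p, ?_, rfl⟩
  rw [closure_prod_eq, closure_univ, closure_Ioo hα.ne]
  exact ⟨mem_univ _, hp⟩

lemma abs_fluxAlong_id_expPolar_le {α C δ : ℝ} (hα : 0 < α) {u : ℝ × ℝ → ℝ}
    (hdecay : ∀ x ∈ closure (sector α) \ {(0 : ℝ × ℝ)},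
        (√(x.1 ^ 2 + x.2 ^ 2) ≤ 1 → |u x| * gradNorm u x ≤ C * √(x.1 ^ 2 + x.2 ^ 2) ^ (δ - 1)) ∧
        (1 ≤ √(x.1 ^ 2 + x.2 ^ 2) → |u x| * gradNorm u x ≤ C * √(x.1 ^ 2 + x.2 ^ 2) ^ (-δ - 1)))
    {p : ℝ × ℝ} (hp : p.2 ∈ Icc 0 α) :
    |fluxAlong u (.id ℝ _) (expPolar p)| ≤ C * exp (-δ * |p.1|) := by
  set x := expPolar p
  have hflux : |fluxAlong u (.id ℝ _) x| ≤ exp p.1 * (|u x| * gradNorm u x) := by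
    have h := abs_fderiv_apply_le u x x
    rw [sqrt_expPolar] at h
    rw [fluxAlong, ContinuousLinearMap.id_apply, abs_mul]
    nlinarith [abs_nonneg (u x)]
  obtain ⟨hnear, hfar⟩ := hdecay x (expPolar_mem_closure_sector hα hp)
  rw [sqrt_expPolar, ← exp_mul] at hnear hfar
  rcases le_total 0 p.1 with hs | hs
  · have h := hfar (one_le_exp hs)
    calc |fluxAlong u (.id ℝ _) x| ≤ exp p.1 * (C * exp (p.1 * (-δ - 1))) :=
          hflux.trans (mul_le_mul_of_nonneg_left h (exp_pos _).le)
      _ = C * exp (-δ * |p.1|) := by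
          rw [abs_of_nonneg hs, mul_left_comm, ← exp_add]; ring_nf
  · have h := hnear (exp_le_one_iff.2 hs)
    calc |fluxAlong u (.id ℝ _) x| ≤ exp p.1 * (C * exp (p.1 * (δ - 1))) :=
          hflux.trans (mul_le_mul_of_nonneg_left h (exp_pos _).le)
      _ = C * exp (-δ * |p.1|) := by
          rw [abs_of_nonpos hs, mul_left_comm, ← exp_add]; ring_nf

lemma ae_mem_Ioo_prod_Ioo_of_mem_Icc (a b : ℝ × ℝ) :
    ∀ᵐ x : ℝ × ℝ, x ∈ Icc a b → x ∈ Ioo a.1 b.1 ×ˢ Ioo a.2 b.2 := by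
  filter_upwards [measure_eq_zero_iff_ae_notMem.1 ((convex_Icc a b).addHaar_frontier volume)]
    with x hx hxab
  rw [isClosed_Icc.frontier_eq, Set.mem_sdiff, not_and_not_right] at hx
  have hint := hx hxab
  rwa [Icc_prod_eq, interior_prod_eq, interior_Icc, interior_Icc] at hint

section Strip

variable {α : ℝ} {u : ℝ × ℝ → ℝ}

lemma divergence_fluxAlong_comp_expPolar (hharm : HarmonicOnSector α u) {p : ℝ × ℝ}
    (hp : p.2 ∈ Ioo 0 α) :
    fderiv ℝ (fluxAlong u (.id ℝ _) ∘ expPolar) p (1, 0)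
      + fderiv ℝ (fluxAlong u quarterTurn ∘ expPolar) p (0, 1) = polarEnergy u (expPolar p) := by
  obtain ⟨hu, hu', hlap⟩ := hharm _ (expPolar_mem_sector hp)
  rw [fderiv_comp_expPolar_apply_fst (hasFDerivAt_fluxAlong _ hu hu').differentiableAt,
    fderiv_comp_expPolar_apply_snd (hasFDerivAt_fluxAlong _ hu hu').differentiableAt,
    fderiv_fluxAlong_add_fderiv_fluxAlong_quarterTurn hu hu', hlap, mul_zero, add_zero]

lemma fluxAlong_quarterTurn_expPolar_of_dirichlet (hdir : ∀ x₁ : ℝ, 0 < x₁ → u (x₁, 0) = 0)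
    (s : ℝ) :
    fluxAlong u quarterTurn (expPolar (s, 0)) = 0 := by
  have h : expPolar (s, 0) = (exp s, 0) := by simp [expPolar]
  rw [fluxAlong, h, hdir _ (exp_pos s), zero_mul]

lemma fluxAlong_quarterTurn_expPolar_of_neumann (hneu : NeumannOnGamma2 α u) (s : ℝ) :
    fluxAlong u quarterTurn (expPolar (s, α)) = 0 := by
  have h : fderiv ℝ u (expPolar (s, α)) (quarterTurn (expPolar (s, α)))
      = exp s * (-sin α * pd1 u (exp s * cos α, exp s * sin α)
        + cos α * pd2 u (exp s * cos α, exp s * sin α)) := by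
    rw [ContinuousLinearMap.apply_eq_fst_smul_add_snd_smul]
    simp only [expPolar, quarterTurn_apply, pd1, pd2, smul_eq_mul]
    ring
  rw [fluxAlong, h, hneu _ (exp_pos s), mul_zero, mul_zero]

end Strip

section Energy

variable {α : ℝ} {u : ℝ × ℝ → ℝ} {U : Set (ℝ × ℝ)}

lemma setIntegral_polarEnergy_eq (hα : 0 < α) (hU : IsOpen U) (hu : ContDiffOn ℝ 1 u U)
    (hUα : ∀ p : ℝ × ℝ, p.2 ∈ Icc 0 α → expPolar p ∈ U) (hharm : HarmonicOnSector α u)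
    (hdir : ∀ x₁ : ℝ, 0 < x₁ → u (x₁, 0) = 0) (hneu : NeumannOnGamma2 α u)
    {a b : ℝ} (hab : a ≤ b) :
    ∫ p in Icc (a, 0) (b, α), polarEnergy u (expPolar p)
      = (∫ θ in (0 : ℝ)..α, fluxAlong u (.id ℝ _) (expPolar (b, θ)))
        - ∫ θ in (0 : ℝ)..α, fluxAlong u (.id ℝ _) (expPolar (a, θ)) := by
  have hbox : MapsTo expPolar (Icc (a, 0) (b, α)) U := fun p hp => hUα p ⟨hp.1.2, hp.2.2⟩
  have hcont : ∀ A, ContinuousOn (fluxAlong u A ∘ expPolar) (Icc (a, 0) (b, α)) := fun A =>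
    (hu.continuousOn_fluxAlong hU A).comp continuous_expPolar.continuousOn hbox
  have hint : IntegrableOn (polarEnergy u ∘ expPolar) (Icc (a, 0) (b, α)) :=
    ((hu.continuousOn_polarEnergy hU).comp continuous_expPolar.continuousOn hbox)
      |>.integrableOn_compact isCompact_Icc
  have hdiv : ∀ᵐ p, p ∈ Icc (a, 0) (b, α) →
      fderiv ℝ (fluxAlong u (.id ℝ _) ∘ expPolar) p (1, 0)
        + fderiv ℝ (fluxAlong u quarterTurn ∘ expPolar) p (0, 1) = polarEnergy u (expPolar p) := by
    filter_upwards [ae_mem_Ioo_prod_Ioo_of_mem_Icc (a, 0) (b, α)] with p hp hpab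
    exact divergence_fluxAlong_comp_expPolar hharm (hp hpab).2
  have hdiff : ∀ A, ∀ p ∈ Ioo a b ×ˢ Ioo 0 α \ ∅,
      HasFDerivAt (fluxAlong u A ∘ expPolar) (fderiv ℝ (fluxAlong u A ∘ expPolar) p) p := by
    rintro A p ⟨⟨-, hp⟩, -⟩
    obtain ⟨hu, hu', -⟩ := hharm _ (expPolar_mem_sector hp)
    exact ((hasFDerivAt_fluxAlong A hu hu').comp p (hasFDerivAt_expPolar p)).differentiableAt
      |>.hasFDerivAt
  have h := integral_divergence_prod_Icc_of_hasFDerivAt_off_countable_of_le _ _ _ _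
    (a, 0) (b, α) (Prod.mk_le_mk.2 ⟨hab, hα.le⟩) ∅ countable_empty
    (hcont _) (hcont _) (hdiff _) (hdiff _)
    (hint.congr_fun_ae <|
      (ae_restrict_iff' measurableSet_Icc).2 (hdiv.mono fun _ h hp => (h hp).symm))
  rw [setIntegral_congr_ae measurableSet_Icc hdiv] at h
  simpa only [Function.comp_apply, fluxAlong_quarterTurn_expPolar_of_dirichlet hdir,
    fluxAlong_quarterTurn_expPolar_of_neumann hneu, intervalIntegral.integral_zero, sub_zero,
    zero_add] using h

lemma setIntegral_polarEnergy_le {C δ : ℝ} (hα : 0 < α) (hU : IsOpen U) (hu : ContDiffOn ℝ 1 u U)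
    (hUα : ∀ p : ℝ × ℝ, p.2 ∈ Icc 0 α → expPolar p ∈ U) (hharm : HarmonicOnSector α u)
    (hdir : ∀ x₁ : ℝ, 0 < x₁ → u (x₁, 0) = 0) (hneu : NeumannOnGamma2 α u)
    (hflux : ∀ p : ℝ × ℝ, p.2 ∈ Icc 0 α →
      |fluxAlong u (.id ℝ _) (expPolar p)| ≤ C * exp (-δ * |p.1|))
    {R : ℝ} (hR : 0 ≤ R) :
    ∫ p in Icc (-R, 0) (R, α), polarEnergy u (expPolar p) ≤ 2 * C * α * exp (-δ * R) := by
  have hside : ∀ s, |s| = R → |∫ θ in (0 : ℝ)..α, fluxAlong u (.id ℝ _) (expPolar (s, θ))|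
      ≤ C * exp (-δ * R) * α := fun s hs => by
    have h := intervalIntegral.norm_integral_le_of_norm_le_const (C := C * exp (-δ * R))
      (f := fun θ => fluxAlong u (.id ℝ _) (expPolar (s, θ))) (a := 0) (b := α) fun θ hθ => by
        rw [uIoc_of_le hα.le] at hθ
        simpa [hs] using hflux (s, θ) (Ioc_subset_Icc_self hθ)
    rwa [sub_zero, abs_of_pos hα, Real.norm_eq_abs] at h
  have hright := abs_le.1 (hside R (abs_of_nonneg hR))
  have hleft := abs_le.1 (hside (-R) (by rw [abs_neg, abs_of_nonneg hR]))
  rw [setIntegral_polarEnergy_eq hα hU hu hUα hharm hdir hneu (by linarith)]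
  linarith [hright.2, hleft.1]

end Energy

lemma eqOn_zero_of_setIntegral_Icc_le {f : ℝ × ℝ → ℝ} {g : ℝ → ℝ} {a b : ℝ}
    (hf : ContinuousOn f (univ ×ˢ Icc a b)) (hf0 : ∀ p, 0 ≤ f p) (hg : Tendsto g atTop (𝓝 0))
    (hfg : ∀ R, 0 ≤ R → ∫ p in Icc (-R, a) (R, b), f p ≤ g R) :
    EqOn f 0 (univ ×ˢ Ioo a b) := by
  rintro p ⟨-, hp⟩
  have hint : ∀ R, IntegrableOn f (Icc (-R, a) (R, b)) := fun R =>
    (hf.mono fun q hq => ⟨mem_univ _, hq.1.2, hq.2.2⟩).integrableOn_compact isCompact_Icc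
  set R := |p.1| + 1
  have hle : ∫ q in Icc (-R, a) (R, b), f q ≤ 0 := by
    refine ge_of_tendsto hg (eventually_atTop.2 ⟨R, fun R' hR' => ?_⟩)
    refine (setIntegral_mono_set (hint R') (ae_of_all _ fun q => hf0 q) ?_).trans
      (hfg R' ((by positivity : (0 : ℝ) ≤ R).trans hR'))
    exact (Icc_subset_Icc (Prod.mk_le_mk.2 ⟨by linarith, le_rfl⟩)
      (Prod.mk_le_mk.2 ⟨hR', le_rfl⟩)).eventuallyLE
  have hzero : f =ᵐ[volume.restrict (Icc (-R, a) (R, b))] 0 :=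
    (integral_eq_zero_iff_of_nonneg_ae (ae_of_all _ hf0) (hint R)).1
      (hle.antisymm (setIntegral_nonneg measurableSet_Icc fun q _ => hf0 q))
  have hbox : Ioo (-R) R ×ˢ Ioo a b ⊆ Icc (-R, a) (R, b) := fun q hq =>
    ⟨⟨hq.1.1.le, hq.2.1.le⟩, ⟨hq.1.2.le, hq.2.2.le⟩⟩
  refine Measure.eqOn_open_of_ae_eq (ae_restrict_of_ae_restrict_of_subset hbox hzero)
    (isOpen_Ioo.prod isOpen_Ioo)
    (hf.mono fun q hq => ⟨mem_univ _, Ioo_subset_Icc_self hq.2⟩) continuousOn_const ⟨?_, hp⟩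
  constructor <;> linarith [neg_abs_le p.1, le_abs_self p.1]

lemma eqOn_zero_of_polarEnergy_eq_zero {α : ℝ} (hα : 0 < α) {u : ℝ × ℝ → ℝ}
    (hcont : ContinuousOn u (closure (sector α))) (hharm : HarmonicOnSector α u)
    (hdir : ∀ x₁ : ℝ, 0 < x₁ → u (x₁, 0) = 0)
    (henergy : EqOn (polarEnergy u ∘ expPolar) 0 (univ ×ˢ Ioo 0 α)) :
    EqOn u 0 (sector α) := by
  rw [← expPolar_image_strip]
  rintro _ ⟨⟨s, θ⟩, ⟨-, hθ⟩, rfl⟩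
  have hangular : ∀ t ∈ Ioo 0 θ, HasDerivAt (fun t => u (expPolar (s, t))) 0 t := by
    intro t ht
    have hst : (s, t).2 ∈ Ioo 0 α := ⟨ht.1, ht.2.trans hθ.2⟩
    have hzero : fderiv ℝ u (expPolar (s, t)) (quarterTurn (expPolar (s, t))) = 0 := by
      have h := henergy ⟨mem_univ _, hst⟩
      simp only [Function.comp_apply, polarEnergy, Pi.zero_apply] at h
      nlinarith [sq_nonneg (fderiv ℝ u (expPolar (s, t)) (expPolar (s, t)))]
    exact hzero ▸ hasDerivAt_comp_expPolar_snd (hharm _ (expPolar_mem_sector hst)).1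
  have hcont' : ContinuousOn (fun t => u (expPolar (s, t))) (Icc 0 θ) :=
    hcont.comp (continuous_expPolar.comp (continuous_const.prodMk continuous_id)).continuousOn
      fun t ht => (expPolar_mem_closure_sector hα (p := (s, t)) ⟨ht.1, ht.2.trans hθ.2.le⟩).1
  obtain ⟨c, -, hc⟩ := exists_hasDerivAt_eq_slope _ _ hθ.1 hcont' hangular
  have h0 : u (expPolar (s, 0)) = 0 := by simpa [expPolar] using hdir _ (exp_pos s)
  rw [h0, sub_zero, sub_zero, eq_comm, div_eq_zero_iff] at hc
  exact hc.resolve_right hθ.1.ne'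

theorem stmt_11_general (α : ℝ) (hα₀ : 0 < α)
    (u : ℝ × ℝ → ℝ)
    (hu_cont : ContinuousOn u (closure (sector α)))
    (hu_smooth : ∃ U : Set (ℝ × ℝ), IsOpen U ∧
      closure (sector α) \ {(0 : ℝ × ℝ)} ⊆ U ∧ ContDiffOn ℝ 1 u U)
    (hu_harm : HarmonicOnSector α u)
    (hu_dir : ∀ x₁ : ℝ, 0 < x₁ → u (x₁, 0) = 0)
    (hu_neu : NeumannOnGamma2 α u)
    (hdecay : ∃ C : ℝ, 0 < C ∧ ∃ δ : ℝ, 0 < δ ∧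
      ∀ x ∈ closure (sector α) \ {(0 : ℝ × ℝ)},
        (Real.sqrt (x.1 ^ 2 + x.2 ^ 2) ≤ 1 →
          |u x| * gradNorm u x ≤ C * Real.sqrt (x.1 ^ 2 + x.2 ^ 2) ^ (δ - 1)) ∧
        (1 ≤ Real.sqrt (x.1 ^ 2 + x.2 ^ 2) →
          |u x| * gradNorm u x ≤ C * Real.sqrt (x.1 ^ 2 + x.2 ^ 2) ^ (-δ - 1))) :
    ∀ x ∈ sector α, u x = 0 := by
  obtain ⟨U, hU, hGU, hu⟩ := hu_smooth
  obtain ⟨C, -, δ, hδ, hdec⟩ := hdecay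
  have hUα : ∀ p : ℝ × ℝ, p.2 ∈ Icc 0 α → expPolar p ∈ U := fun p hp =>
    hGU (expPolar_mem_closure_sector hα₀ hp)
  have hbound : Tendsto (fun R => 2 * C * α * exp (-δ * R)) atTop (𝓝 0) := by
    simpa using (tendsto_exp_atBot.comp (tendsto_id.const_mul_atTop_of_neg (neg_lt_zero.2 hδ)))
      |>.const_mul (2 * C * α)
  refine eqOn_zero_of_polarEnergy_eq_zero hα₀ hu_cont hu_harm hu_dir ?_
  refine eqOn_zero_of_setIntegral_Icc_le ?_ (fun p => polarEnergy_nonneg u _) hbound fun R hR =>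
    setIntegral_polarEnergy_le hα₀ hU hu hUα hu_harm hu_dir hu_neu
      (fun p hp => abs_fluxAlong_id_expPolar_le hα₀ hdec hp) hR
  exact (hu.continuousOn_polarEnergy hU).comp continuous_expPolar.continuousOn
    fun p hp => hUα p hp.2

/-- Uniqueness for the homogeneous mixed problem: a finite-energy
harmonic function on the sector `G`, continuous on `cl(G)`, with zero Dirichlet data on
`Γ₁` and zero Neumann data on `Γ₂`, and with the stated decay at the corner and at
infinity, vanishes identically on `G`. -/
theorem stmt_11 (α : ℝ) (hα₀ : 0 < α) (hα₁ : α ≤ Real.pi)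
    (u : ℝ × ℝ → ℝ)
    (hu_cont : ContinuousOn u (closure (sector α)))
    (hu_smooth : ∃ U : Set (ℝ × ℝ), IsOpen U ∧
      closure (sector α) \ {(0 : ℝ × ℝ)} ⊆ U ∧ ContDiffOn ℝ 1 u U)
    (hu_harm : HarmonicOnSector α u)
    (hu_dir : ∀ x₁ : ℝ, 0 < x₁ → u (x₁, 0) = 0)
    (hu_neu : NeumannOnGamma2 α u)
    (hdecay : ∃ C : ℝ, 0 < C ∧ ∃ δ : ℝ, 0 < δ ∧
      ∀ x ∈ closure (sector α) \ {(0 : ℝ × ℝ)},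
        (Real.sqrt (x.1 ^ 2 + x.2 ^ 2) ≤ 1 →
          |u x| * gradNorm u x ≤ C * Real.sqrt (x.1 ^ 2 + x.2 ^ 2) ^ (δ - 1)) ∧
        (1 ≤ Real.sqrt (x.1 ^ 2 + x.2 ^ 2) →
          |u x| * gradNorm u x ≤ C * Real.sqrt (x.1 ^ 2 + x.2 ^ 2) ^ (-δ - 1)))
    (hint : IntegrableOn (gradSq u) (sector α) volume) :
    ∀ x ∈ sector α, u x = 0 :=
  stmt_11_general α hα₀ u hu_cont hu_smooth hu_harm hu_dir hu_neu hdecay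
end

section
/- Let E be a Banach space, A : E → E a continuous linear operator, and u : ℝ × ℝ → E a function such that u, ∂₁u and ∂₁²u (first and second partial derivatives in the first variable) exist and are jointly continuous, and such that for all t, s ∈ ℝ: ∂₁²u(t, s) + A(u(t, s)) = 0 and u(0, s) = 0. Set F(s) = ∂₁u(0, s). Then the function v(t) := ∫₀ᵗ u(t − s, s) ds is twice differentiable on ℝ and satisfies v″(t) + A(v(t)) = F(t) for all t ∈ ℝ, together with v(0) = 0 and v′(0) = 0. -/
/-!
Write `v t = Φ (t, t)` with `Φ (x, y) = ∫ s in 0..y, u (x - s, s)`. Both partial derivatives of `Φ`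
are continuous (differentiation under the integral sign in `x`, the fundamental theorem of calculus
in `y`), so `Φ` is differentiable and the chain rule gives
`v' t = u (0, t) + ∫ s in 0..t, u₁ (t - s, s) = ∫ s in 0..t, u₁ (t - s, s)`.
Differentiating once more, `v'' t = u₁ (0, t) + ∫ s in 0..t, u₂ (t - s, s) = F t - A (v t)`.
-/

open MeasureTheory Set Filter

section

variable {E : Type*} [NormedAddCommGroup E] [NormedSpace ℝ E]
  {g g₁ : ℝ × ℝ → E}

theorem hasDerivAt_intervalIntegral_of_hasDerivAt_fst (hg : Continuous g) (hg₁ : Continuous g₁)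
    (hd : ∀ t s, HasDerivAt (fun t' => g (t', s)) (g₁ (t, s)) t) (a b t : ℝ) :
    HasDerivAt (fun t' => ∫ s in a..b, g (t', s)) (∫ s in a..b, g₁ (t, s)) t := by
  obtain ⟨C, hC⟩ : ∃ C, ∀ p ∈ Metric.closedBall t 1 ×ˢ uIcc a b, ‖g₁ p‖ ≤ C :=
    ((isCompact_closedBall t 1).prod isCompact_uIcc).exists_bound_of_continuousOn
      hg₁.continuousOn
  refine (intervalIntegral.hasDerivAt_integral_of_dominated_loc_of_deriv_le (μ := volume)
    (F := fun x s => g (x, s)) (F' := fun x s => g₁ (x, s)) (bound := fun _ => C)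
    (Metric.closedBall_mem_nhds t one_pos) ?_ ?_ ?_ ?_ intervalIntegrable_const ?_).2
  · exact Eventually.of_forall fun x => (hg.comp (Continuous.prodMk_right x)).aestronglyMeasurable
  · exact (hg.comp (Continuous.prodMk_right t)).intervalIntegrable a b
  · exact (hg₁.comp (Continuous.prodMk_right t)).aestronglyMeasurable
  · exact ae_of_all _ fun s hs x hx => hC (x, s) ⟨hx, uIoc_subset_uIcc hs⟩
  · exact ae_of_all _ fun s _ x _ => hd x s

theorem hasDerivAt_intervalIntegral_diag [CompleteSpace E] (hg : Continuous g) (hg₁ : Continuous g₁)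
    (hd : ∀ t s, HasDerivAt (fun t' => g (t', s)) (g₁ (t, s)) t) (a t : ℝ) :
    HasDerivAt (fun t' => ∫ s in a..t', g (t', s)) ((∫ s in a..t, g₁ (t, s)) + g (t, t)) t := by
  let f₁ : ℝ → ℝ → ℝ →L[ℝ] E := fun x y =>
    ContinuousLinearMap.toSpanSingleton ℝ (∫ s in a..y, g₁ (x, s))
  let f₂ : ℝ → ℝ → ℝ →L[ℝ] E := fun x y => ContinuousLinearMap.toSpanSingleton ℝ (g (x, y))
  have hΦ₁ (p : ℝ × ℝ) : HasFDerivAt (fun x => ∫ s in a..p.2, g (x, s)) (f₁ p.1 p.2) p.1 :=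
    (hasDerivAt_intervalIntegral_of_hasDerivAt_fst hg hg₁ hd a p.2 p.1).hasFDerivAt
  have hΦ₂ (p : ℝ × ℝ) : HasFDerivAt (fun y => ∫ s in a..y, g (p.1, s)) (f₂ p.1 p.2) p.2 :=
    ((hg.comp (Continuous.prodMk_right p.1)).integral_hasStrictDerivAt a p.2).hasDerivAt
      |>.hasFDerivAt
  have hf₁ : Continuous ↿f₁ :=
    (ContinuousLinearMap.toSpanSingletonLIE ℝ E).continuous.comp
      (intervalIntegral.continuous_parametric_intervalIntegral_of_continuous
        (f := fun p : ℝ × ℝ => fun s => g₁ (p.1, s)) (by fun_prop) continuous_snd)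
  have hf₂ : Continuous ↿f₂ :=
    (ContinuousLinearMap.toSpanSingletonLIE ℝ E).continuous.comp hg
  have hΦ := hasStrictFDerivAt_uncurry_coprod (𝕜 := ℝ) (u := (t, t))
    (f := fun x y => ∫ s in a..y, g (x, s)) (Eventually.of_forall hΦ₁)
    (Eventually.of_forall hΦ₂) hf₁.continuousAt hf₂.continuousAt
  have := hΦ.hasFDerivAt.comp_hasDerivAt (f := fun x : ℝ => (x, x)) t
    ((hasDerivAt_id t).prodMk (hasDerivAt_id t))
  exact this.congr_deriv (by simp [f₁, f₂, Function.HasUncurry.uncurry])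

end

/-- Duhamel's principle: Let `E` be a Banach space, `A : E → E` a
continuous linear operator, and `u : ℝ × ℝ → E` such that `u`, `∂₁u` and `∂₁²u` exist
and are jointly continuous, with `∂₁²u(t,s) + A(u(t,s)) = 0` and `u(0,s) = 0` for all
`t, s`. With `F(s) = ∂₁u(0,s)`, the function `v(t) = ∫₀ᵗ u(t−s, s) ds` is twice
differentiable and satisfies `v″ + Av = F`, `v(0) = 0`, `v′(0) = 0`. -/
theorem stmt_13 {E : Type*} [NormedAddCommGroup E] [NormedSpace ℝ E] [CompleteSpace E]
    (A : E →L[ℝ] E)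
    (u u₁ u₂ : ℝ × ℝ → E)
    (hu₁ : ∀ t s : ℝ, HasDerivAt (fun t' : ℝ => u (t', s)) (u₁ (t, s)) t)
    (hu₂ : ∀ t s : ℝ, HasDerivAt (fun t' : ℝ => u₁ (t', s)) (u₂ (t, s)) t)
    (hu_cont : Continuous u) (hu₁_cont : Continuous u₁) (hu₂_cont : Continuous u₂)
    (heq : ∀ t s : ℝ, u₂ (t, s) + A (u (t, s)) = 0)
    (hzero : ∀ s : ℝ, u (0, s) = 0)
    (F : ℝ → E) (hF : ∀ s : ℝ, F s = u₁ (0, s))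
    (v : ℝ → E) (hv : ∀ t : ℝ, v t = ∫ s in (0 : ℝ)..t, u (t - s, s)) :
    Differentiable ℝ v ∧ Differentiable ℝ (deriv v) ∧
    (∀ t : ℝ, deriv (deriv v) t + A (v t) = F t) ∧
    v 0 = 0 ∧ deriv v 0 = 0 := by
  have hshift : Continuous fun p : ℝ × ℝ => (p.1 - p.2, p.2) := by fun_prop
  have hv' (t : ℝ) : HasDerivAt v (∫ s in 0..t, u₁ (t - s, s)) t := by
    have := hasDerivAt_intervalIntegral_diag (hu_cont.comp hshift) (hu₁_cont.comp hshift)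
      (fun t s => (hu₁ (t - s) s).comp_sub_const t s) 0 t
    rw [funext hv]
    simpa [hzero] using this
  have hv'' (t : ℝ) : HasDerivAt (deriv v) ((∫ s in 0..t, u₂ (t - s, s)) + F t) t := by
    have := hasDerivAt_intervalIntegral_diag (hu₁_cont.comp hshift) (hu₂_cont.comp hshift)
      (fun t s => (hu₂ (t - s) s).comp_sub_const t s) 0 t
    rw [funext fun t => (hv' t).deriv, hF]
    simpa using this
  have hu₂_integral (t : ℝ) : ∫ s in 0..t, u₂ (t - s, s) = -A (v t) := by
    have : ∀ s, u₂ (t - s, s) = -A (u (t - s, s)) := fun s => eq_neg_of_add_eq_zero_left (heq _ s)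
    simp only [this, intervalIntegral.integral_neg, hv]
    rw [A.intervalIntegral_comp_comm
      ((by fun_prop : Continuous fun s => u (t - s, s)).intervalIntegrable 0 t)]
  refine ⟨fun t => (hv' t).differentiableAt, fun t => (hv'' t).differentiableAt, fun t => ?_,
    by simp [hv], by simp [(hv' 0).deriv]⟩
  rw [(hv'' t).deriv, hu₂_integral, neg_add_cancel_comm]
end

section
/- Let H be a complex Banach space and B : H → H a continuous linear operator, and let c(t) = (1/2)(exp(itB) + exp(−itB)) and s(t) = ∫₀ᵗ c(τ) dτ. Let F : ℝ → H be continuous and v₀, v₁ ∈ H. Then the function v(t) := c(t)(v₀) + s(t)(v₁) + ∫₀ᵗ s(t − σ)(F(σ)) dσ is twice differentiable on ℝ and satisfies v″(t) + B²(v(t)) = F(t) for all t ∈ ℝ, together with v(0) = v₀ and v′(0) = v₁. -/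
/-!
Put `A = i • B`, so that `c t = (exp (t • A) + exp (t • -A)) / 2` and `A² = -B²`. Since `s' = c`
and `s 0 = 0`, an integration by parts turns `s t v₁ + ∫₀ᵗ s (t - σ) (F σ) dσ` into
`∫₀ᵗ c (t - σ) (g σ) dσ` with `g t = v₁ + ∫₀ᵗ F`. Hence `v = (u + w) / 2`, where `u` and `w` are the
variation-of-constants solutions of `u' = A u + g` and `w' = -A w + g` with initial value `v₀`.
Then `v' = A (u - w) / 2 + g` and `v'' = A² v + F = F - B² v`.
-/

open NormedSpace intervalIntegral

section

variable {E F : Type*} [NormedAddCommGroup E] [NormedSpace ℂ E] [NormedAddCommGroup F]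
  [NormedSpace ℂ F]

theorem HasDerivAt.clm_apply_of_complex {c : ℝ → E →L[ℂ] F} {c' : E →L[ℂ] F} {u : ℝ → E}
    {u' : E} {x : ℝ} (hc : HasDerivAt c c' x) (hu : HasDerivAt u u' x) :
    HasDerivAt (fun y => c y (u y)) (c' (u x) + c x u') x :=
  ((ContinuousLinearMap.restrictScalarsL ℂ E F ℝ ℝ).hasFDerivAt.comp_hasDerivAt x hc).clm_apply hu

variable [CompleteSpace F]

theorem integral_comp_sub_apply_eq {S C : ℝ → E →L[ℂ] F} {g f : ℝ → E}
    (hS : ∀ t, HasDerivAt S (C t) t) (hC : Continuous C) (hS0 : S 0 = 0)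
    (hg : ∀ t, HasDerivAt g (f t) t) (hf : Continuous f) (t : ℝ) :
    S t (g 0) + ∫ σ in (0 : ℝ)..t, S (t - σ) (f σ) = ∫ σ in (0 : ℝ)..t, C (t - σ) (g σ) := by
  have hS_cont : Continuous S := continuous_iff_continuousAt.2 fun t => (hS t).continuousAt
  have hg_cont : Continuous g := continuous_iff_continuousAt.2 fun t => (hg t).continuousAt
  have hderiv : ∀ σ, HasDerivAt (fun σ => S (t - σ) (g σ))
      (S (t - σ) (f σ) - C (t - σ) (g σ)) σ := fun σ => by
    simpa [sub_eq_neg_add] using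
      ((hS (t - σ)).scomp σ ((hasDerivAt_id σ).const_sub t)).clm_apply_of_complex (hg σ)
  have hSf : IntervalIntegrable (fun σ => S (t - σ) (f σ)) MeasureTheory.volume 0 t :=
    Continuous.intervalIntegrable (by fun_prop) _ _
  have hCg : IntervalIntegrable (fun σ => C (t - σ) (g σ)) MeasureTheory.volume 0 t :=
    Continuous.intervalIntegrable (by fun_prop) _ _
  have hparts := integral_eq_sub_of_hasDerivAt (fun σ _ => hderiv σ) (hSf.sub hCg)
  rw [integral_sub hSf hCg, sub_self, hS0, zero_apply, zero_sub, sub_zero,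
    sub_eq_iff_eq_add] at hparts
  rw [hparts]
  abel

end

section

variable {H : Type*} [NormedAddCommGroup H] [NormedSpace ℂ H]

theorem ofReal_mul_I_smul (B : H →L[ℂ] H) (t : ℝ) :
    ((t : ℂ) * Complex.I) • B = t • (Complex.I • B) := by
  rw [mul_smul, ← Complex.coe_algebraMap, algebraMap_smul]

theorem hasDerivAt_half_add {A : H →L[ℂ] H} {u w g : ℝ → H} {t : ℝ}
    (hu : HasDerivAt u (A (u t) + g t) t) (hw : HasDerivAt w ((-A) (w t) + g t) t) :
    HasDerivAt (fun t => (2⁻¹ : ℂ) • (u t + w t)) ((2⁻¹ : ℂ) • A (u t - w t) + g t) t := by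
  convert (hu.fun_add hw).fun_const_smul (2⁻¹ : ℂ) using 1
  simp only [neg_apply, map_sub]
  module

theorem hasDerivAt_half_smul_sub_add {A : H →L[ℂ] H} {u w g : ℝ → H} {f : H} {t : ℝ}
    (hu : HasDerivAt u (A (u t) + g t) t) (hw : HasDerivAt w ((-A) (w t) + g t) t)
    (hg : HasDerivAt g f t) :
    HasDerivAt (fun t => (2⁻¹ : ℂ) • A (u t - w t) + g t)
      (A (A ((2⁻¹ : ℂ) • (u t + w t))) + f) t := by
  have hA : HasDerivAt (fun t => A (u t - w t)) (A (A (u t) + g t - ((-A) (w t) + g t))) t :=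
    (A.restrictScalars ℝ).hasFDerivAt.comp_hasDerivAt t (hu.sub hw)
  convert (hA.fun_const_smul (2⁻¹ : ℂ)).fun_add hg using 1
  simp only [neg_apply, map_sub, map_add, map_neg, map_smul]
  module

/-- Variation of constants formula for `u' = A u + g`, `u 0 = u₀`. -/
noncomputable def mildSolution (A : H →L[ℂ] H) (u₀ : H) (g : ℝ → H) (t : ℝ) : H :=
  exp (t • A) u₀ + ∫ σ in (0 : ℝ)..t, exp ((t - σ) • A) (g σ)

theorem mildSolution_zero (A : H →L[ℂ] H) (u₀ : H) (g : ℝ → H) : mildSolution A u₀ g 0 = u₀ := by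
  simp [mildSolution]

variable [CompleteSpace H]

theorem exp_add_smul (A : H →L[ℂ] H) (s t : ℝ) :
    exp ((s + t) • A) = exp (s • A) * exp (t • A) := by
  rw [add_smul]
  exact exp_add_of_commute_of_mem_ball (𝕂 := ℝ) (((Commute.refl A).smul_left s).smul_right t)
    ((expSeries_radius_eq_top ℝ (H →L[ℂ] H)).symm ▸ edist_lt_top _ _)
    ((expSeries_radius_eq_top ℝ (H →L[ℂ] H)).symm ▸ edist_lt_top _ _)

theorem exp_smul_apply_exp_neg_smul_apply (A : H →L[ℂ] H) (t : ℝ) (x : H) :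
    exp (t • A) (exp ((-t) • A) x) = x := by
  rw [← mul_apply_eq_comp, ← exp_add_smul, add_neg_cancel, zero_smul, exp_zero,
    one_apply_eq_self]

theorem continuous_exp_smul (A : H →L[ℂ] H) : Continuous fun t : ℝ => exp (t • A) :=
  (differentiable_exp_smul_const ℝ A).continuous

theorem mildSolution_eq {A : H →L[ℂ] H} {g : ℝ → H} (hg : Continuous g) (u₀ : H) (t : ℝ) :
    mildSolution A u₀ g t = exp (t • A) (u₀ + ∫ σ in (0 : ℝ)..t, exp ((-σ) • A) (g σ)) := by
  have hint : IntervalIntegrable (fun σ => exp ((-σ) • A) (g σ)) MeasureTheory.volume 0 t :=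
    ((continuous_exp_smul A).comp continuous_neg |>.clm_apply hg).intervalIntegrable _ _
  simp_rw [mildSolution, sub_eq_add_neg t, exp_add_smul, mul_apply_eq_comp,
    map_add, (exp (t • A)).intervalIntegral_comp_comm hint]

theorem hasDerivAt_mildSolution {A : H →L[ℂ] H} {g : ℝ → H} (hg : Continuous g) (u₀ : H)
    (t : ℝ) : HasDerivAt (mildSolution A u₀ g) (A (mildSolution A u₀ g t) + g t) t := by
  have hint : Continuous fun σ => exp ((-σ) • A) (g σ) :=
    ((continuous_exp_smul A).comp continuous_neg).clm_apply hg
  have := (hasDerivAt_exp_smul_const' (𝕂 := ℝ) A t).clm_apply_of_complex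
    ((hint.integral_hasStrictDerivAt 0 t).hasDerivAt.const_add u₀)
  rw [funext (mildSolution_eq hg u₀)]
  convert this using 1
  simp only [mul_apply_eq_comp, exp_smul_apply_exp_neg_smul_apply]

theorem half_smul_mildSolution_add {A : H →L[ℂ] H} {C : ℝ → H →L[ℂ] H}
    (hC : ∀ t : ℝ, C t = (2⁻¹ : ℂ) • (exp (t • A) + exp (t • -A))) {g : ℝ → H} (hg : Continuous g)
    (u₀ : H) (t : ℝ) :
    (2⁻¹ : ℂ) • (mildSolution A u₀ g t + mildSolution (-A) u₀ g t) =
      C t u₀ + ∫ σ in (0 : ℝ)..t, C (t - σ) (g σ) := by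
  have hint : ∀ A' : H →L[ℂ] H,
      IntervalIntegrable (fun σ => exp ((t - σ) • A') (g σ)) MeasureTheory.volume 0 t :=
    fun A' => Continuous.intervalIntegrable
      (((continuous_exp_smul A').comp (continuous_const.sub continuous_id)).clm_apply hg) _ _
  simp only [hC, mildSolution, smul_apply, add_apply,
    integral_smul, integral_add (hint A) (hint (-A))]
  module

theorem deriv_deriv_eq_of_eq_half_smul_mildSolution_add {A : H →L[ℂ] H} {g : ℝ → H} {f : ℝ → H}
    (hg : ∀ t, HasDerivAt g (f t) t) {v : ℝ → H} {v₀ : H}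
    (hv : ∀ t, v t = (2⁻¹ : ℂ) • (mildSolution A v₀ g t + mildSolution (-A) v₀ g t)) :
    Differentiable ℝ v ∧ Differentiable ℝ (deriv v) ∧
    (∀ t, deriv (deriv v) t = A (A (v t)) + f t) ∧ v 0 = v₀ ∧ deriv v 0 = g 0 := by
  have hg_cont : Continuous g := continuous_iff_continuousAt.2 fun t => (hg t).continuousAt
  set u := mildSolution A v₀ g
  set w := mildSolution (-A) v₀ g
  have hu : ∀ t, HasDerivAt u (A (u t) + g t) t := hasDerivAt_mildSolution hg_cont v₀
  have hw : ∀ t, HasDerivAt w ((-A) (w t) + g t) t := hasDerivAt_mildSolution hg_cont v₀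
  rw [funext hv]
  set v' : ℝ → H := fun t => (2⁻¹ : ℂ) • A (u t - w t) + g t
  have hv_deriv : ∀ t, HasDerivAt (fun t => (2⁻¹ : ℂ) • (u t + w t)) (v' t) t := fun t =>
    hasDerivAt_half_add (hu t) (hw t)
  have hv'_deriv : ∀ t, HasDerivAt v' (A (A ((2⁻¹ : ℂ) • (u t + w t))) + f t) t := fun t =>
    hasDerivAt_half_smul_sub_add (hu t) (hw t) (hg t)
  have hderiv : deriv (fun t => (2⁻¹ : ℂ) • (u t + w t)) = v' :=
    funext fun t => (hv_deriv t).deriv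
  refine ⟨fun t => (hv_deriv t).differentiableAt, hderiv ▸ fun t => (hv'_deriv t).differentiableAt,
    fun t => by rw [hderiv, (hv'_deriv t).deriv], ?_, ?_⟩
  · simp only [u, w, mildSolution_zero]
    module
  · rw [hderiv]
    simp [v', u, w, mildSolution_zero]

end

/-- In a complex Banach space `H`, for a continuous linear operator
`B : H → H`, with the operator cosine family `c(t) = (1/2)(exp(itB) + exp(−itB))` and
sine family `s(t) = ∫₀ᵗ c(τ) dτ`, for any continuous `F : ℝ → H` and `v₀, v₁ ∈ H`, the
function `v(t) = c(t)v₀ + s(t)v₁ + ∫₀ᵗ s(t−σ)(F(σ)) dσ` is twice differentiable and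
satisfies `v″ + B²v = F`, `v(0) = v₀`, `v′(0) = v₁`. -/
theorem stmt_14 {H : Type*} [NormedAddCommGroup H] [NormedSpace ℂ H] [CompleteSpace H]
    (B : H →L[ℂ] H)
    (c : ℝ → H →L[ℂ] H)
    (hc : ∀ t : ℝ, c t = ((1 : ℂ) / 2) •
      (NormedSpace.exp (((t : ℂ) * Complex.I) • B)
        + NormedSpace.exp ((-(t : ℂ) * Complex.I) • B)))
    (s : ℝ → H →L[ℂ] H)
    (hs : ∀ t : ℝ, s t = ∫ τ in (0 : ℝ)..t, c τ)
    (F : ℝ → H) (hF : Continuous F)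
    (v₀ v₁ : H)
    (v : ℝ → H)
    (hv : ∀ t : ℝ, v t = c t v₀ + s t v₁ + ∫ σ in (0 : ℝ)..t, s (t - σ) (F σ)) :
    Differentiable ℝ v ∧ Differentiable ℝ (deriv v) ∧
    (∀ t : ℝ, deriv (deriv v) t + B (B (v t)) = F t) ∧
    v 0 = v₀ ∧ deriv v 0 = v₁ := by
  set A : H →L[ℂ] H := Complex.I • B
  have hcA : ∀ t : ℝ, c t = (2⁻¹ : ℂ) • (exp (t • A) + exp (t • -A)) := fun t => by
    rw [hc, one_div, ofReal_mul_I_smul, neg_mul, neg_smul, ofReal_mul_I_smul, smul_neg]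
  have hc_cont : Continuous c := by
    rw [funext hcA]
    exact ((continuous_exp_smul A).add (continuous_exp_smul (-A))).const_smul (2⁻¹ : ℂ)
  have hs_deriv : ∀ t, HasDerivAt s (c t) t := fun t => by
    rw [funext hs]
    exact (hc_cont.integral_hasStrictDerivAt 0 t).hasDerivAt
  set g : ℝ → H := fun t => v₁ + ∫ σ in (0 : ℝ)..t, F σ
  have hg_deriv : ∀ t, HasDerivAt g (F t) t := fun t =>
    (hF.integral_hasStrictDerivAt 0 t).hasDerivAt.const_add v₁
  have hg_cont : Continuous g := continuous_iff_continuousAt.2 fun t => (hg_deriv t).continuousAt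
  have hv_eq : ∀ t, v t = (2⁻¹ : ℂ) • (mildSolution A v₀ g t + mildSolution (-A) v₀ g t) :=
    fun t => by
      rw [hv, add_assoc, show v₁ = g 0 by simp [g],
        integral_comp_sub_apply_eq hs_deriv hc_cont (by simp [hs]) hg_deriv hF,
        half_smul_mildSolution_add hcA hg_cont]
  obtain ⟨hv_diff, hv'_diff, hv'', hv0, hv'0⟩ :=
    deriv_deriv_eq_of_eq_half_smul_mildSolution_add hg_deriv hv_eq
  have hAA : ∀ x, A (A x) = -B (B x) := fun x => by
    simp only [A, smul_apply, map_smul, smul_smul, Complex.I_mul_I, neg_one_smul]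
  refine ⟨hv_diff, hv'_diff, fun t => ?_, hv0, by simpa [g] using hv'0⟩
  rw [hv'', hAA]
  abel
end

section
/- Let H be a complex Hilbert space and B : H → H a bounded self-adjoint operator. Let c(t) = (1/2)(exp(itB) + exp(−itB)) and s(t) = ∫₀ᵗ c(τ) dτ. Let F : ℝ → H be continuous, v₀, v₁ ∈ H, and v(t) = c(t)(v₀) + s(t)(v₁) + ∫₀ᵗ s(t − σ)(F(σ)) dσ. Then for all t ≥ 0: ‖B(v(t))‖ ≤ ‖B(v₀)‖ + ‖v₁‖ + ∫₀ᵗ ‖F(σ)‖ dσ. -/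
/-!
`B` commutes with `c(t)`, and by the fundamental theorem of calculus
`B s(t) = sin(tB) = (exp(itB) - exp(-itB)) / (2i)`. Since `exp(±itB)` is unitary, both `c(t)`
and `sin(tB)` are contractions, so each of the three terms of `B v(t)` is bounded by the
corresponding term on the right.
-/

open Complex (I)
open NormedSpace (exp)

theorem hasDerivAt_exp_ofReal_mul_smul {A : Type*} [NormedRing A] [NormedAlgebra ℂ A]
    [CompleteSpace A] (z : ℂ) (a : A) (r : ℝ) :
    HasDerivAt (fun u : ℝ => exp (((u : ℂ) * z) • a)) ((z • a) * exp (((r : ℂ) * z) • a)) r := by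
  have h := hasDerivAt_exp_smul_const' (𝕂 := ℝ) (z • a) r
  simp only [RCLike.real_smul_eq_coe_smul (K := ℂ), smul_smul] at h
  exact h

theorem CStarRing.norm_le_one_of_mem_unitary {E : Type*} [NormedRing E] [StarRing E]
    [CStarRing E] {U : E} (hU : U ∈ unitary E) : ‖U‖ ≤ 1 := by
  rcases subsingleton_or_nontrivial E with _ | _
  · simp [Subsingleton.elim U 0]
  · exact (CStarRing.norm_of_mem_unitary hU).le

section CosineFamily

variable {A : Type*} [CStarAlgebra A]

theorem norm_exp_ofReal_mul_I_smul_le_one {a : A} (ha : IsSelfAdjoint a) (t : ℝ) :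
    ‖exp (((t : ℂ) * I) • a)‖ ≤ 1 := by
  let +nondep : NormedAlgebra ℚ A := .restrictScalars ℚ ℂ A
  have hskew : ((t : ℂ) * I) ∈ skewAdjoint ℂ := by simp [skewAdjoint.mem_iff]
  exact CStarRing.norm_le_one_of_mem_unitary
    (NormedSpace.exp_mem_unitary_of_mem_skewAdjoint (ha.smul_mem_skewAdjoint hskew))

noncomputable def cosFamily (a : A) (t : ℝ) : A :=
  (1 / 2 : ℂ) • (exp (((t : ℂ) * I) • a) + exp ((-(t : ℂ) * I) • a))

noncomputable def sinFamily (a : A) (t : ℝ) : A :=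
  (2 * I)⁻¹ • (exp (((t : ℂ) * I) • a) - exp ((-(t : ℂ) * I) • a))

theorem norm_cosFamily_le_one {a : A} (ha : IsSelfAdjoint a) (t : ℝ) : ‖cosFamily a t‖ ≤ 1 := by
  rw [cosFamily, ← Complex.ofReal_neg, norm_smul, show ‖(1 / 2 : ℂ)‖ = 1 / 2 by norm_num]
  calc _ ≤ 1 / 2 * (1 + 1 : ℝ) := by
        gcongr
        exact (norm_add_le _ _).trans (add_le_add (norm_exp_ofReal_mul_I_smul_le_one ha t)
          (norm_exp_ofReal_mul_I_smul_le_one ha (-t)))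
    _ = 1 := by norm_num

theorem norm_sinFamily_le_one {a : A} (ha : IsSelfAdjoint a) (t : ℝ) : ‖sinFamily a t‖ ≤ 1 := by
  rw [sinFamily, ← Complex.ofReal_neg, norm_smul, show ‖(2 * I)⁻¹‖ = 1 / 2 by simp]
  calc _ ≤ 1 / 2 * (1 + 1 : ℝ) := by
        gcongr
        exact (norm_sub_le _ _).trans (add_le_add (norm_exp_ofReal_mul_I_smul_le_one ha t)
          (norm_exp_ofReal_mul_I_smul_le_one ha (-t)))
    _ = 1 := by norm_num

theorem commute_cosFamily (a : A) (t : ℝ) : Commute a (cosFamily a t) :=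
  ((Commute.exp_right ((Commute.refl a).smul_right _)).add_right
    (Commute.exp_right ((Commute.refl a).smul_right _))).smul_right _

theorem hasDerivAt_sinFamily (a : A) (t : ℝ) :
    HasDerivAt (sinFamily a) (a * cosFamily a t) t := by
  have hpos := hasDerivAt_exp_ofReal_mul_smul I a t
  have hneg := hasDerivAt_exp_ofReal_mul_smul (-I) a t
  simp only [← neg_mul_comm] at hneg
  refine ((hpos.sub hneg).const_smul (2 * I)⁻¹).congr_deriv ?_
  unfold cosFamily
  rw [mul_smul_comm, mul_add, neg_smul, neg_mul, sub_neg_eq_add, smul_mul_assoc,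
    smul_mul_assoc, ← smul_add, smul_smul]
  congr 1
  field_simp

theorem continuous_cosFamily (a : A) : Continuous (cosFamily a) := by
  have hpos := fun t : ℝ => (hasDerivAt_exp_ofReal_mul_smul I a t).continuousAt
  have hneg := fun t : ℝ => (hasDerivAt_exp_ofReal_mul_smul (-I) a t).continuousAt
  simp only [← neg_mul_comm] at hneg
  exact ((continuous_iff_continuousAt.2 hpos).add (continuous_iff_continuousAt.2 hneg)).const_smul _

theorem mul_integral_cosFamily (a : A) (t : ℝ) :
    a * ∫ τ in (0 : ℝ)..t, cosFamily a τ = sinFamily a t := by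
  have hint := (continuous_cosFamily a).intervalIntegrable (μ := MeasureTheory.volume) 0 t
  rw [← ContinuousLinearMap.mul_apply' ℂ A a,
    ← (ContinuousLinearMap.mul ℂ A a).intervalIntegral_comp_comm hint]
  simp only [ContinuousLinearMap.mul_apply']
  rw [intervalIntegral.integral_eq_sub_of_hasDerivAt (fun τ _ => hasDerivAt_sinFamily a τ)
    ((continuous_const.mul (continuous_cosFamily a)).intervalIntegrable 0 t)]
  simp [sinFamily]

end CosineFamily

/-- In a complex Hilbert space `H`, for a bounded self-adjoint operator
`B : H → H`, with `c(t) = (1/2)(exp(itB) + exp(−itB))` and `s(t) = ∫₀ᵗ c(τ) dτ`,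
for continuous `F : ℝ → H`, `v₀, v₁ ∈ H` and
`v(t) = c(t)v₀ + s(t)v₁ + ∫₀ᵗ s(t−σ)(F(σ)) dσ`, one has the a priori estimate
`‖B(v(t))‖ ≤ ‖B(v₀)‖ + ‖v₁‖ + ∫₀ᵗ ‖F(σ)‖ dσ` for all `t ≥ 0`. -/
theorem stmt_16 {H : Type*} [NormedAddCommGroup H] [InnerProductSpace ℂ H]
    [CompleteSpace H]
    (B : H →L[ℂ] H) (hB : IsSelfAdjoint B)
    (c : ℝ → H →L[ℂ] H)
    (hc : ∀ t : ℝ, c t = ((1 : ℂ) / 2) •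
      (NormedSpace.exp (((t : ℂ) * Complex.I) • B)
        + NormedSpace.exp ((-(t : ℂ) * Complex.I) • B)))
    (s : ℝ → H →L[ℂ] H)
    (hs : ∀ t : ℝ, s t = ∫ τ in (0 : ℝ)..t, c τ)
    (F : ℝ → H) (hF : Continuous F)
    (v₀ v₁ : H)
    (v : ℝ → H)
    (hv : ∀ t : ℝ, v t = c t v₀ + s t v₁ + ∫ σ in (0 : ℝ)..t, s (t - σ) (F σ)) :
    ∀ t : ℝ, 0 ≤ t →
      ‖B (v t)‖ ≤ ‖B v₀‖ + ‖v₁‖ + ∫ σ in (0 : ℝ)..t, ‖F σ‖ := by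
  intro t ht
  obtain rfl : c = cosFamily B := funext hc
  have hsin : ∀ r x, ‖B (s r x)‖ ≤ ‖x‖ := fun r x => by
    rw [← mul_apply_eq_comp, hs, mul_integral_cosFamily]
    exact ((sinFamily B r).le_opNorm x).trans
      (mul_le_of_le_one_left (norm_nonneg x) (norm_sinFamily_le_one hB r))
  have hcos : ‖B (cosFamily B t v₀)‖ ≤ ‖B v₀‖ := by
    rw [← mul_apply_eq_comp, (commute_cosFamily B t).eq, mul_apply_eq_comp]
    exact ((cosFamily B t).le_opNorm _).trans
      (mul_le_of_le_one_left (norm_nonneg _) (norm_cosFamily_le_one hB t))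
  have hs_cont : Continuous s := by
    rw [funext hs]
    exact intervalIntegral.continuous_primitive
      (fun a b => (continuous_cosFamily B).intervalIntegrable a b) 0
  have hduhamel : ‖B (∫ σ in (0 : ℝ)..t, s (t - σ) (F σ))‖ ≤ ∫ σ in (0 : ℝ)..t, ‖F σ‖ := by
    have hcont : Continuous fun σ => s (t - σ) (F σ) :=
      (hs_cont.comp (continuous_sub_left t)).clm_apply hF
    rw [← B.intervalIntegral_comp_comm (hcont.intervalIntegrable 0 t)]
    exact intervalIntegral.norm_integral_le_of_norm_le ht
      (MeasureTheory.ae_of_all _ fun σ _ => hsin _ _) (hF.norm.intervalIntegrable 0 t)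
  calc ‖B (v t)‖
      ≤ ‖B (cosFamily B t v₀)‖ + ‖B (s t v₁)‖ + ‖B (∫ σ in (0 : ℝ)..t, s (t - σ) (F σ))‖ := by
        rw [hv, map_add, map_add]
        exact norm_add₃_le
    _ ≤ ‖B v₀‖ + ‖v₁‖ + ∫ σ in (0 : ℝ)..t, ‖F σ‖ := by gcongr; exact hsin t v₁
end
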